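/- Let F be a field, q ∈ F and f, g ∈ F[h]. Then the set { x^i h^j y^k : i, j, k ∈ ℤ_{≥0} } is an F-vector space basis of the quantum generalized Heisenberg algebra H_q(f,g). More generally, for any basis {v_j}_{j∈ℤ_{≥0}} of F[h], the set { x^i v_j y^k : i, j, k ∈ ℤ_{≥0} } is a basis of H_q(f,g). -/

import Mathlib

open Polynomial

/-- The three generators `x`, `y`, `h` of a quantum generalized Heisenberg algebra. -/
inductive QGHAGen : Type
  | x : QGHAGen
  | y : QGHAGen
  | h : QGHAGen

/-- The defining relations of the quantum generalized Heisenberg algebra `H_q(f,g)`: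
`h*x = x*f(h)`, `y*h = f(h)*y`, and `y*x - q*(x*y) = g(h)`. -/
inductive QGHARel (F : Type*) [Field F] (q : F) (f g : F[X]) :
    FreeAlgebra F QGHAGen → FreeAlgebra F QGHAGen → Prop
  | hx : QGHARel F q f g
      (FreeAlgebra.ι F QGHAGen.h * FreeAlgebra.ι F QGHAGen.x)
      (FreeAlgebra.ι F QGHAGen.x * aeval (FreeAlgebra.ι F QGHAGen.h) f)
  | yh : QGHARel F q f g
      (FreeAlgebra.ι F QGHAGen.y * FreeAlgebra.ι F QGHAGen.h)
      (aeval (FreeAlgebra.ι F QGHAGen.h) f * FreeAlgebra.ι F QGHAGen.y)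
  | yx : QGHARel F q f g
      (FreeAlgebra.ι F QGHAGen.y * FreeAlgebra.ι F QGHAGen.x)
      (q • (FreeAlgebra.ι F QGHAGen.x * FreeAlgebra.ι F QGHAGen.y)
        + aeval (FreeAlgebra.ι F QGHAGen.h) g)

/-- The quantum generalized Heisenberg algebra `H_q(f,g)`. -/
def QGHA (F : Type*) [Field F] (q : F) (f g : F[X]) : Type _ :=
  RingQuot (QGHARel F q f g)

namespace QGHA

variable {F : Type*} [Field F] (q : F) (f g : F[X])

instance : Ring (QGHA F q f g) :=
  inferInstanceAs (Ring (RingQuot (QGHARel F q f g)))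

instance : Algebra F (QGHA F q f g) :=
  inferInstanceAs (Algebra F (RingQuot (QGHARel F q f g)))

/-- The generator `x` of `H_q(f,g)`. -/
def x : QGHA F q f g :=
  RingQuot.mkAlgHom F (QGHARel F q f g) (FreeAlgebra.ι F QGHAGen.x)

/-- The generator `y` of `H_q(f,g)`. -/
def y : QGHA F q f g :=
  RingQuot.mkAlgHom F (QGHARel F q f g) (FreeAlgebra.ι F QGHAGen.y)

/-- The generator `h` of `H_q(f,g)`. -/
def h : QGHA F q f g :=
  RingQuot.mkAlgHom F (QGHARel F q f g) (FreeAlgebra.ι F QGHAGen.h)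

end QGHA

/-!
Let `M = ⨁_{(i, k) ∈ ℕ²} F[h]`, the slot `(i, k)` standing for the elements `x^i p(h) y^k`.
Rewriting `x ·`, `h ·` and `y ·` of such an element in normal order, using
`h x^i = x^i f^{∘i}(h)`, `y p(h) = p(f(h)) y` and `y x = q x y + g(h)`, defines three operators
on `M`; they satisfy the defining relations, so they give a representation `ρ` of `H_q(f,g)` on
`M`. The ordering map `Φ : M → H_q(f,g)`, `(i, k, p) ↦ x^i p(h) y^k`, intertwines `ρ` with
left multiplication, so `a ↦ ρ(a)(1 in slot (0, 0))` is a two-sided inverse of `Φ`. Hence `Φ` is a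
linear isomorphism, and it carries the basis `v_j in slot (i, k)` of `M` to `x^i v_j(h) y^k`.
-/

theorem SemiconjBy.aeval {R A : Type*} [CommSemiring R] [Semiring A] [Algebra R A] {a b c : A}
    (h : SemiconjBy a b c) (P : R[X]) : SemiconjBy a (aeval b P) (aeval c P) := by
  induction P using Polynomial.induction_on' with
  | add P Q hP hQ => simpa only [map_add] using hP.add_right hQ
  | monomial n r =>
      simp only [aeval_monomial]
      exact SemiconjBy.mul_right (Algebra.commutes r a).symm (h.pow_right n)

noncomputable def Polynomial.iterComp {R : Type*} [CommSemiring R] (f : R[X]) : ℕ → R[X]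
  | 0 => X
  | n + 1 => f.comp (f.iterComp n)

theorem Polynomial.iterComp_zero {R : Type*} [CommSemiring R] (f : R[X]) : f.iterComp 0 = X := rfl

theorem Polynomial.iterComp_succ {R : Type*} [CommSemiring R] (f : R[X]) (n : ℕ) :
    f.iterComp (n + 1) = f.comp (f.iterComp n) := rfl

def Equiv.prodProdEquivSigma (α β γ : Type*) : α × β × γ ≃ Σ _ : α × γ, β where
  toFun t := ⟨(t.1, t.2.2), t.2.1⟩
  invFun s := (s.1.1, s.2, s.1.2)
  left_inv _ := rfl
  right_inv _ := rfl

namespace QGHA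

section Relations

variable {F : Type*} [Field F] (q : F) (f g : F[X])

/-- `RingQuot.mkAlgHom`, retyped to land in `QGHA`, so that rewriting sees the instances of
`QGHA`. -/
noncomputable def mk : FreeAlgebra F QGHAGen →ₐ[F] QGHA F q f g :=
  RingQuot.mkAlgHom F (QGHARel F q f g)

theorem mk_surjective : Function.Surjective (mk q f g) :=
  RingQuot.mkAlgHom_surjective F _

theorem mk_rel {a b : FreeAlgebra F QGHAGen} (hab : QGHARel F q f g a b) :
    mk q f g a = mk q f g b :=
  RingQuot.mkAlgHom_rel F hab

theorem mk_ι_x : mk q f g (FreeAlgebra.ι F .x) = x q f g := rfl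

theorem mk_ι_y : mk q f g (FreeAlgebra.ι F .y) = y q f g := rfl

theorem mk_ι_h : mk q f g (FreeAlgebra.ι F .h) = h q f g := rfl

theorem aeval_h_eq_mk (P : F[X]) :
    aeval (h q f g) P = mk q f g (aeval (FreeAlgebra.ι F QGHAGen.h) P) :=
  aeval_algHom_apply (mk q f g) _ P

theorem h_mul_x : h q f g * x q f g = x q f g * aeval (h q f g) f := by
  rw [aeval_h_eq_mk, ← mk_ι_x, ← mk_ι_h, ← map_mul, ← map_mul]
  exact mk_rel q f g .hx

theorem y_mul_h : y q f g * h q f g = aeval (h q f g) f * y q f g := by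
  rw [aeval_h_eq_mk, ← mk_ι_y, ← mk_ι_h, ← map_mul, ← map_mul]
  exact mk_rel q f g .yh

theorem y_mul_x : y q f g * x q f g = q • (x q f g * y q f g) + aeval (h q f g) g := by
  rw [aeval_h_eq_mk, ← mk_ι_x, ← mk_ι_y, ← map_mul, ← map_mul, ← map_smul, ← map_add]
  exact mk_rel q f g .yx

theorem y_mul_x_mul (a : QGHA F q f g) :
    y q f g * (x q f g * a) = q • (x q f g * (y q f g * a)) + aeval (h q f g) g * a := by
  rw [← mul_assoc, y_mul_x, add_mul, smul_mul_assoc, mul_assoc]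

theorem y_mul_aeval_h (P : F[X]) :
    y q f g * aeval (h q f g) P = aeval (h q f g) (P.comp f) * y q f g := by
  rw [aeval_comp]
  exact SemiconjBy.aeval (y_mul_h q f g) P

theorem aeval_h_mul_x (P : F[X]) :
    aeval (h q f g) P * x q f g = x q f g * aeval (h q f g) (P.comp f) := by
  rw [aeval_comp]
  exact (SemiconjBy.aeval (h_mul_x q f g).symm P).symm

theorem aeval_h_mul_x_pow (P : F[X]) (i : ℕ) :
    aeval (h q f g) P * x q f g ^ i = x q f g ^ i * aeval (h q f g) (P.comp (f.iterComp i)) := by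
  induction i generalizing P with
  | zero => simp [iterComp_zero]
  | succ i ih =>
      rw [pow_succ', ← mul_assoc, aeval_h_mul_x, mul_assoc, ih, ← mul_assoc, ← pow_succ',
        iterComp_succ, comp_assoc]

theorem h_mul_x_pow (i : ℕ) :
    h q f g * x q f g ^ i = x q f g ^ i * aeval (h q f g) (f.iterComp i) := by
  simpa using aeval_h_mul_x_pow q f g X i

section lift

variable {A : Type*} [Semiring A] [Algebra F A] (X' Y' H' : A)
    (hx : H' * X' = X' * aeval H' f) (hy : Y' * H' = aeval H' f * Y')
    (hyx : Y' * X' = q • (X' * Y') + aeval H' g)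

noncomputable def lift : QGHA F q f g →ₐ[F] A :=
  RingQuot.liftAlgHom F ⟨FreeAlgebra.lift F (fun | .x => X' | .y => Y' | .h => H'), by
    rintro _ _ ⟨⟩ <;>
      simpa only [map_mul, map_add, map_smul, ← aeval_algHom_apply, FreeAlgebra.lift_ι_apply]⟩

theorem lift_mk (w : FreeAlgebra F QGHAGen) :
    lift q f g X' Y' H' hx hy hyx (mk q f g w) =
      FreeAlgebra.lift F (fun | .x => X' | .y => Y' | .h => H') w :=
  RingQuot.liftAlgHom_mkAlgHom_apply _ _ _ _

@[simp] theorem lift_x : lift q f g X' Y' H' hx hy hyx (x q f g) = X' :=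
  (lift_mk ..).trans (FreeAlgebra.lift_ι_apply _ _)

@[simp] theorem lift_y : lift q f g X' Y' H' hx hy hyx (y q f g) = Y' :=
  (lift_mk ..).trans (FreeAlgebra.lift_ι_apply _ _)

@[simp] theorem lift_h : lift q f g X' Y' H' hx hy hyx (h q f g) = H' :=
  (lift_mk ..).trans (FreeAlgebra.lift_ι_apply _ _)

end lift

@[elab_as_elim]
theorem induction {motive : QGHA F q f g → Prop}
    (algebraMap : ∀ r : F, motive (algebraMap F _ r)) (x : motive (x q f g))
    (y : motive (y q f g)) (h : motive (h q f g))
    (add : ∀ a b, motive a → motive b → motive (a + b))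
    (mul : ∀ a b, motive a → motive b → motive (a * b)) (a : QGHA F q f g) : motive a := by
  obtain ⟨w, rfl⟩ := mk_surjective q f g a
  induction w using FreeAlgebra.induction with
  | grade0 r => simpa only [AlgHom.commutes] using algebraMap r
  | grade1 i => cases i <;> assumption
  | mul a b ha hb => simpa only [map_mul] using mul _ _ ha hb
  | add a b ha hb => simpa only [map_add] using add _ _ ha hb

end Relations

open Finsupp

/-- The slot `(i, k)` carrying `p` stands for the normally ordered element `x^i p(h) y^k`. -/
abbrev Model (R : Type*) [CommSemiring R] : Type _ := (ℕ × ℕ) →₀ R[X]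

namespace Model

variable {R : Type*} [CommSemiring R] (q : R) (f g : R[X])

noncomputable def actX : Module.End R (Model R) :=
  lmapDomain R[X] R fun ik => (ik.1 + 1, ik.2)

noncomputable def actH : Module.End R (Model R) :=
  lsum ℕ fun ik => lsingle ik ∘ₗ LinearMap.mulLeft R (f.iterComp ik.1)

/-- `y x^i p(h) y^k`, put in normal order by `y x = q x y + g(h)` and `y p(h) = p(f(h)) y`. -/
noncomputable def actYSlot : ℕ → ℕ → R[X] →ₗ[R] Model R
  | 0, k => lsingle (0, k + 1) ∘ₗ (aeval f).toLinearMap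
  | i + 1, k => q • (actX ∘ₗ actYSlot i k) +
      lsingle (i, k) ∘ₗ LinearMap.mulLeft R (g.comp (f.iterComp i))

noncomputable def actY : Module.End R (Model R) :=
  lsum ℕ fun ik => actYSlot q f g ik.1 ik.2

variable {f}

theorem actX_single (i k : ℕ) (p : R[X]) : actX (single (i, k) p) = single (i + 1, k) p := by
  simp [actX]

theorem actH_single (i k : ℕ) (p : R[X]) :
    actH f (single (i, k) p) = single (i, k) (f.iterComp i * p) := by
  simp [actH]

theorem actY_single (i k : ℕ) (p : R[X]) :
    actY q f g (single (i, k) p) = actYSlot q f g i k p := by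
  simp [actY]

theorem aeval_actH_single (P : R[X]) (i k : ℕ) (p : R[X]) :
    aeval (actH f) P (single (i, k) p) = single (i, k) (P.comp (f.iterComp i) * p) := by
  induction P using Polynomial.induction_on generalizing p with
  | C r => simp [Algebra.smul_def]
  | add P Q hP hQ =>
      simp only [map_add, LinearMap.add_apply, hP, hQ, add_comp, add_mul, single_add]
  | monomial n r ih =>
      rw [pow_succ, ← mul_assoc, map_mul, aeval_X, Module.End.mul_apply, actH_single, ih]
      simp only [mul_comp, X_comp, mul_assoc]

theorem aeval_actH_actX (Q : R[X]) (w : Model R) :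
    aeval (actH f) Q (actX w) = actX (aeval (actH f) (Q.comp f) w) := by
  induction w using Finsupp.induction_linear with
  | zero => simp
  | add v w hv hw => simp only [map_add, hv, hw]
  | single ik p =>
      obtain ⟨i, k⟩ := ik
      simp only [actX_single, aeval_actH_single, iterComp_succ, comp_assoc]

theorem actYSlot_comp_iterComp_mul (i k : ℕ) (P p : R[X]) :
    actYSlot q f g i k (P.comp (f.iterComp i) * p) =
      aeval (actH f) (P.comp f) (actYSlot q f g i k p) := by
  induction i generalizing P with
  | zero => simp [actYSlot, iterComp_zero, aeval_actH_single, ← comp_eq_aeval, mul_comp]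
  | succ i ih =>
      simp only [actYSlot, LinearMap.add_apply, LinearMap.smul_apply, LinearMap.comp_apply,
        LinearMap.mulLeft_apply, iterComp_succ, ← comp_assoc, ih, map_add, map_smul,
        aeval_actH_actX, lsingle_apply, aeval_actH_single, mul_left_comm]

theorem actH_mul_actX : actH f * actX = actX * aeval (actH f) f := by
  refine Finsupp.lhom_ext fun ⟨i, k⟩ p => ?_
  simp only [Module.End.mul_apply, actX_single, actH_single, aeval_actH_single, iterComp_succ]

theorem actY_mul_actH : actY q f g * actH f = aeval (actH f) f * actY q f g := by
  refine Finsupp.lhom_ext fun ⟨i, k⟩ p => ?_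
  simpa only [LinearMap.comp_apply, Module.End.mul_apply, lsingle_apply, actH_single, actY_single,
    X_comp] using actYSlot_comp_iterComp_mul q g i k X p

theorem actY_mul_actX : actY q f g * actX = q • (actX * actY q f g) + aeval (actH f) g := by
  refine Finsupp.lhom_ext fun ⟨i, k⟩ p => ?_
  simp [actX_single, actY_single, aeval_actH_single, actYSlot]

theorem actX_pow_single (n i k : ℕ) (p : R[X]) :
    (actX ^ n) (single (i, k) p) = single (i + n, k) p := by
  induction n with
  | zero => simp
  | succ n ih => rw [pow_succ', Module.End.mul_apply, ih, actX_single, add_assoc]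

theorem actY_pow_single_zero (k : ℕ) :
    (actY q f g ^ k) (single (0, 0) 1) = single (0, k) 1 := by
  induction k with
  | zero => simp
  | succ k ih => simp [pow_succ', ih, actY_single, actYSlot]

end Model

section Representation

open Model

variable {F : Type*} [Field F] (q : F) (f g : F[X])

noncomputable def rep : QGHA F q f g →ₐ[F] Module.End F (Model F) :=
  lift q f g actX (actY q f g) (actH f) actH_mul_actX (actY_mul_actH q g) (actY_mul_actX q g)

noncomputable def orderedProduct : Model F →ₗ[F] QGHA F q f g :=
  lsum F fun ik => LinearMap.mulLeft F (x q f g ^ ik.1) ∘ₗ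
    LinearMap.mulRight F (y q f g ^ ik.2) ∘ₗ (aeval (h q f g)).toLinearMap

theorem orderedProduct_single (i k : ℕ) (p : F[X]) :
    orderedProduct q f g (single (i, k) p) = x q f g ^ i * aeval (h q f g) p * y q f g ^ k := by
  simp [orderedProduct, mul_assoc]

theorem orderedProduct_actX (w : Model F) :
    orderedProduct q f g (actX w) = x q f g * orderedProduct q f g w := by
  induction w using Finsupp.induction_linear with
  | zero => simp
  | add v w hv hw => simp only [map_add, hv, hw, mul_add]
  | single ik p =>
      obtain ⟨i, k⟩ := ik
      simp only [actX_single, orderedProduct_single, pow_succ', mul_assoc]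

theorem orderedProduct_actH (w : Model F) :
    orderedProduct q f g (actH f w) = h q f g * orderedProduct q f g w := by
  induction w using Finsupp.induction_linear with
  | zero => simp
  | add v w hv hw => simp only [map_add, hv, hw, mul_add]
  | single ik p =>
      obtain ⟨i, k⟩ := ik
      simp only [actH_single, orderedProduct_single, map_mul, ← mul_assoc, h_mul_x_pow]

theorem orderedProduct_actYSlot (i k : ℕ) (p : F[X]) :
    orderedProduct q f g (actYSlot q f g i k p) =
      y q f g * (x q f g ^ i * aeval (h q f g) p * y q f g ^ k) := by
  induction i with
  | zero =>
      simp only [actYSlot, LinearMap.comp_apply, lsingle_apply, orderedProduct_single,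
        pow_zero, one_mul, AlgHom.toLinearMap_apply, ← comp_eq_aeval, ← mul_assoc, y_mul_aeval_h,
        pow_succ']
  | succ i ih =>
      simp only [actYSlot, LinearMap.add_apply, LinearMap.smul_apply, LinearMap.comp_apply,
        map_add, map_smul, orderedProduct_actX, ih, lsingle_apply, LinearMap.mulLeft_apply,
        orderedProduct_single]
      rw [pow_succ', mul_assoc (x q f g), mul_assoc (x q f g), y_mul_x_mul, map_mul,
        ← mul_assoc (x q f g ^ i), ← aeval_h_mul_x_pow]
      simp only [mul_assoc]

theorem orderedProduct_actY (w : Model F) :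
    orderedProduct q f g (actY q f g w) = y q f g * orderedProduct q f g w := by
  induction w using Finsupp.induction_linear with
  | zero => simp
  | add v w hv hw => simp only [map_add, hv, hw, mul_add]
  | single ik p =>
      obtain ⟨i, k⟩ := ik
      simp only [actY_single, orderedProduct_actYSlot, orderedProduct_single]

theorem orderedProduct_rep (a : QGHA F q f g) (w : Model F) :
    orderedProduct q f g (rep q f g a w) = a * orderedProduct q f g w := by
  induction a using QGHA.induction generalizing w with
  | algebraMap r => simp [Algebra.smul_def]
  | x => simp [rep, orderedProduct_actX]
  | y => simp [rep, orderedProduct_actY]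
  | h => simp [rep, orderedProduct_actH]
  | add a b ha hb => simp only [map_add, LinearMap.add_apply, ha, hb, add_mul]
  | mul a b ha hb => simp only [map_mul, Module.End.mul_apply, ha, hb, mul_assoc]

noncomputable def toModel : QGHA F q f g →ₗ[F] Model F :=
  LinearMap.applyₗ (single (0, 0) 1) ∘ₗ (rep q f g).toLinearMap

theorem toModel_apply (a : QGHA F q f g) : toModel q f g a = rep q f g a (single (0, 0) 1) := rfl

theorem orderedProduct_toModel (a : QGHA F q f g) :
    orderedProduct q f g (toModel q f g a) = a := by
  simp [toModel_apply, orderedProduct_rep, orderedProduct_single]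

theorem toModel_orderedProduct (w : Model F) : toModel q f g (orderedProduct q f g w) = w := by
  induction w using Finsupp.induction_linear with
  | zero => simp
  | add v w hv hw => simp only [map_add, hv, hw]
  | single ik p =>
      obtain ⟨i, k⟩ := ik
      simp [toModel_apply, orderedProduct_single, rep, ← aeval_algHom_apply, actY_pow_single_zero,
        aeval_actH_single, iterComp_zero, actX_pow_single]

noncomputable def orderedProductEquiv : Model F ≃ₗ[F] QGHA F q f g :=
  { orderedProduct q f g with
    invFun := toModel q f g
    left_inv := toModel_orderedProduct q f g
    right_inv := orderedProduct_toModel q f g }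

noncomputable def orderedBasis (v : Module.Basis ℕ F F[X]) :
    Module.Basis (ℕ × ℕ × ℕ) F (QGHA F q f g) :=
  ((Finsupp.basis fun _ => v).map (orderedProductEquiv q f g)).reindex
    (Equiv.prodProdEquivSigma ℕ ℕ ℕ).symm

theorem orderedBasis_apply (v : Module.Basis ℕ F F[X]) (i j k : ℕ) :
    orderedBasis q f g v (i, j, k) = x q f g ^ i * aeval (h q f g) (v j) * y q f g ^ k := by
  simp [orderedBasis, Equiv.prodProdEquivSigma, orderedProductEquiv, orderedProduct_single]

end Representation

end QGHA

/-- The set `{ x^i h^j y^k : i, j, k ∈ ℕ }` is an `F`-vector-space basis of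
`H_q(f,g)`; more generally, for any basis `{v_j}_{j∈ℕ}` of `F[h]`, the set
`{ x^i v_j(h) y^k : i, j, k ∈ ℕ }` is a basis of `H_q(f,g)`. -/
theorem qgha_basis {F : Type*} [Field F] (q : F) (f g : F[X]) :
    (∃ b : Module.Basis (ℕ × ℕ × ℕ) F (QGHA F q f g),
      ∀ i j k : ℕ, b (i, j, k) = QGHA.x q f g ^ i * QGHA.h q f g ^ j * QGHA.y q f g ^ k) ∧
    (∀ v : Module.Basis ℕ F F[X], ∃ b : Module.Basis (ℕ × ℕ × ℕ) F (QGHA F q f g),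
      ∀ i j k : ℕ, b (i, j, k) =
        QGHA.x q f g ^ i * aeval (QGHA.h q f g) (v j) * QGHA.y q f g ^ k) := by
  refine ⟨⟨QGHA.orderedBasis q f g (basisMonomials F), fun i j k => ?_⟩,
    fun v => ⟨QGHA.orderedBasis q f g v, QGHA.orderedBasis_apply q f g v⟩⟩
  simp only [QGHA.orderedBasis_apply, coe_basisMonomials, ← X_pow_eq_monomial, map_pow, aeval_X]
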